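/- If (φ,ψ) is a magnetic Dirac-harmonic map, then the energy-momentum tensor T_{αβ} = 2⟨dφ(e_α), dφ(e_β)⟩ − δ_{αβ}|dφ|² + ⟨ψ, e_α·∇̃_{e_β}ψ⟩ is symmetric and traceless. -/
import Mathlib


/-- **The energy-momentum tensor is symmetric and traceless.**

Abstract local setting on a closed Riemannian spin surface `M` with local
orthonormal frame `{e₁, e₂}`: `Sect` is the space of sections of `φ⁻¹TN`,
`Spin` that of sections of `ΣM ⊗ φ⁻¹TN`, with fibrewise inner products
`innS`, `innP` (the spinor one being the real, symmetric pairing) valued in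
functions on `M`; `dphi α = dφ(e_α)`, `nab β = ∇̃_{e_β}` the spinor covariant
derivative, `cl α = e_α·` Clifford multiplication, satisfying the Clifford
relations and skew-adjointness; `dirac = e_α·∇̃_{e_α}` is the twisted Dirac
operator, `tau = τ(φ)`, `Rterm = R(φ,ψ)`, `Zterm = Z(dφ(e₁) ∧ dφ(e₂))`.
If `(φ,ψ)` is a magnetic Dirac-harmonic map, i.e.
`τ(φ) = R(φ,ψ) + Z(dφ(e₁)∧dφ(e₂))` and `D̸ψ = 0`, then the energy-momentum
tensor `T_{αβ} = 2⟨dφ(e_α),dφ(e_β)⟩ − δ_{αβ}|dφ|² + ⟨ψ, e_α·∇̃_{e_β}ψ⟩`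
is symmetric (`T_{αβ} = T_{βα}`) and traceless (`∑_α T_{αα} = 0`). -/
theorem energy_momentum_tensor_symmetric_traceless
    {M : Type*} {Sect Spin : Type*}
    [AddCommGroup Sect] [Module ℝ Sect] [AddCommGroup Spin] [Module ℝ Spin]
    (innS : Sect →ₗ[ℝ] Sect →ₗ[ℝ] (M → ℝ))
    (innP : Spin →ₗ[ℝ] Spin →ₗ[ℝ] (M → ℝ))
    (hinnS_symm : ∀ s t : Sect, innS s t = innS t s)
    (hinnP_symm : ∀ s t : Spin, innP s t = innP t s)
    (dphi : Fin 2 → Sect)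
    (nab : Fin 2 → Spin →ₗ[ℝ] Spin)
    (cl : Fin 2 → Spin →ₗ[ℝ] Spin)
    -- Clifford relations and skew-adjointness of Clifford multiplication
    (hclifford : ∀ α β (χ : Spin),
      cl α (cl β χ) + cl β (cl α χ) = (-2 : ℝ) • ((if α = β then (1:ℝ) else 0) • χ))
    (hcl_skew : ∀ α (χ ξ : Spin), innP (cl α χ) ξ = - innP χ (cl α ξ))
    (psi : Spin)
    (dirac : Spin →ₗ[ℝ] Spin)
    (hdirac : ∀ χ, dirac χ = ∑ α, cl α (nab α χ))
    (tau Rterm Zterm : Sect)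
    -- the magnetic Dirac-harmonic map equations
    (hEL1 : tau = Rterm + Zterm)
    (hEL2 : dirac psi = 0)
    -- the energy-momentum tensor
    (T : Fin 2 → Fin 2 → M → ℝ)
    (hT : ∀ α β, T α β = fun x =>
        2 * innS (dphi α) (dphi β) x
          - (if α = β then (1 : ℝ) else 0) * (∑ γ, innS (dphi γ) (dphi γ) x)
          + innP psi (cl α (nab β psi)) x) :
    (∀ α β, T α β = T β α) ∧ (∑ α, T α α) = 0 := by
  have clsq : ∀ α (χ : Spin), cl α (cl α χ) = -χ := by
    intro α χ
    have h := hclifford α α χ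
    rw [if_pos rfl, one_smul] at h
    have h2 : (2:ℝ) • cl α (cl α χ) = (2:ℝ) • (-χ) := by
      rw [two_smul, h, neg_smul, smul_neg]
    exact smul_right_injective Spin two_ne_zero h2
  have hac : ∀ χ : Spin, cl 1 (cl 0 χ) = - cl 0 (cl 1 χ) := by
    intro χ
    have h := hclifford 1 0 χ
    have hne : (1 : Fin 2) ≠ 0 := by decide
    simp only [if_neg hne, zero_smul, smul_zero] at h
    exact eq_neg_of_add_eq_zero_left h
  have hd : cl 0 (nab 0 psi) + cl 1 (nab 1 psi) = 0 := by
    have h := hEL2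
    rw [hdirac, Fin.sum_univ_two] at h
    exact h
  have hn0 : nab 0 psi = cl 0 (cl 1 (nab 1 psi)) := by
    have h1 : cl 0 (nab 0 psi) = - cl 1 (nab 1 psi) :=
      eq_neg_of_add_eq_zero_left hd
    have h2 := congrArg (cl 0) h1
    rw [clsq] at h2
    rw [map_neg] at h2
    have := congrArg Neg.neg h2
    simpa using this
  have key : cl 1 (nab 0 psi) = cl 0 (nab 1 psi) := by
    rw [hn0, hac, clsq, map_neg, neg_neg]
  have hsym : ∀ α β, innP psi (cl α (nab β psi)) = innP psi (cl β (nab α psi)) := by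
    intro α β
    fin_cases α <;> fin_cases β <;> simp [key]
  constructor
  · intro α β
    rw [hT α β, hT β α]
    funext x
    have hi : (if α = β then (1:ℝ) else 0) = (if β = α then (1:ℝ) else 0) := by
      simp [eq_comm]
    rw [hinnS_symm (dphi α) (dphi β), hsym α β, hi]
  · funext x
    rw [Finset.sum_apply, Fin.sum_univ_two, hT 0 0, hT 1 1]
    rw [if_pos rfl, if_pos rfl]
    have hp : innP psi (cl 0 (nab 0 psi)) + innP psi (cl 1 (nab 1 psi)) = 0 := by
      rw [← map_add, hd, map_zero]
    have hp' := congrFun hp x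
    simp only [Pi.add_apply, Pi.zero_apply] at hp'
    simp only [Fin.sum_univ_two, Pi.zero_apply]
    linarith
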